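/- Let A, B ⊆ ℝ, let R be a correspondence between A and B with distortion dis R = c, and suppose A is t-separated for some t > 2c. Choose for each p ∈ A a point p' ∈ R(p). Then for any three distinct points p, q, r ∈ A: if p lies strictly between q and r on the real line, then p' lies between q' and r'. -/

import Mathlib

open ENNReal

/-- The distortion of a relation `R ⊆ ℝ × ℝ`, valued in `ℝ≥0∞`. -/
noncomputable def relDis (R : Set (ℝ × ℝ)) : ℝ≥0∞ :=
  ⨆ p ∈ R, ⨆ q ∈ R, ENNReal.ofReal |dist p.1 q.1 - dist p.2 q.2|

/-- `R` is a correspondence between the subsets `A` and `B` of `ℝ`: a relation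
contained in `A × B` whose projections onto `A` and onto `B` are surjective. -/
def IsCorrBetween (A B : Set ℝ) (R : Set (ℝ × ℝ)) : Prop :=
  R ⊆ A ×ˢ B ∧ (∀ a ∈ A, ∃ b ∈ B, (a, b) ∈ R) ∧ ∀ b ∈ B, ∃ a ∈ A, (a, b) ∈ R

lemma ofReal_abs_dist_sub_dist_le_relDis {R : Set (ℝ × ℝ)} {a b : ℝ × ℝ} (ha : a ∈ R)
    (hb : b ∈ R) : ENNReal.ofReal |dist a.1 b.1 - dist a.2 b.2| ≤ relDis R :=
  le_iSup₂_of_le a ha (le_iSup₂_of_le b hb le_rfl)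

lemma abs_dist_sub_dist_le_of_relDis_le {R : Set (ℝ × ℝ)} {c : ℝ} (hc0 : 0 ≤ c)
    (hc : relDis R ≤ ENNReal.ofReal c) ⦃a b : ℝ × ℝ⦄ (ha : a ∈ R) (hb : b ∈ R) :
    |dist a.1 b.1 - dist a.2 b.2| ≤ c :=
  (ENNReal.ofReal_le_ofReal_iff hc0).1 ((ofReal_abs_dist_sub_dist_le_relDis ha hb).trans hc)

lemma dist_add_dist_of_min_lt_of_lt_max {q p r : ℝ} (h1 : min q r < p) (h2 : p < max q r) :
    dist q p + dist p r = dist q r := by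
  apply dist_add_dist_of_mem_segment
  rw [segment_eq_uIcc]
  exact ⟨h1.le, h2.le⟩

lemma min_le_and_le_max_of_max_dist_lt_dist {x y z : ℝ}
    (h : max (dist x y) (dist y z) < dist x z) : min x z ≤ y ∧ y ≤ max x z := by
  simp only [max_lt_iff, Real.dist_eq] at h
  rw [min_le_iff, le_max_iff]
  constructor <;> by_contra! hy <;>
    cases abs_cases (x - y) <;> cases abs_cases (y - z) <;> cases abs_cases (x - z) <;> linarith

/-- Both gaps exceeding `2 * c` forces `dist x z > max (dist x y) (dist y z)`, and on the line
this puts `y` between `x` and `z`. -/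
lemma min_le_and_le_max_of_abs_dist_sub_dist_le {c q p r x y z : ℝ}
    (hqpr : dist q p + dist p r = dist q r) (hqp : 2 * c < dist q p) (hpr : 2 * c < dist p r)
    (hxy : |dist q p - dist x y| ≤ c) (hyz : |dist p r - dist y z| ≤ c)
    (hxz : |dist q r - dist x z| ≤ c) : min x z ≤ y ∧ y ≤ max x z := by
  rw [abs_le] at hxy hyz hxz
  apply min_le_and_le_max_of_max_dist_lt_dist
  rw [max_lt_iff]
  constructor <;> linarith

theorem stmt_7_general (A : Set ℝ) (R : Set (ℝ × ℝ))
    (c : ℝ) (hc0 : 0 ≤ c) (hc : relDis R = ENNReal.ofReal c)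
    (t : ℝ) (ht : 2 * c < t)
    (hsep : ∀ a ∈ A, ∀ b ∈ A, a ≠ b → t ≤ |a - b|)
    (f : ℝ → ℝ) (hf : ∀ p ∈ A, (p, f p) ∈ R)
    (p q r : ℝ) (hp : p ∈ A) (hq : q ∈ A) (hr : r ∈ A)
    (hpq : p ≠ q) (hpr : p ≠ r)
    (h1 : min q r < p) (h2 : p < max q r) :
    min (f q) (f r) ≤ f p ∧ f p ≤ max (f q) (f r) := by
  have hdis := abs_dist_sub_dist_le_of_relDis_le hc0 hc.le
  refine min_le_and_le_max_of_abs_dist_sub_dist_le (dist_add_dist_of_min_lt_of_lt_max h1 h2)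
    ?_ ?_ (hdis (hf q hq) (hf p hp)) (hdis (hf p hp) (hf r hr)) (hdis (hf q hq) (hf r hr))
  · exact ht.trans_le (hsep q hq p hp hpq.symm)
  · exact ht.trans_le (hsep p hp r hr hpr)

/-- Let `R` be a correspondence between `A, B ⊆ ℝ` with distortion `c`, and let `A` be
`t`-separated with `t > 2c`. Choose for each `p ∈ A` a point `f p ∈ R(p)`. Then for any
three distinct points `p, q, r ∈ A`, if `p` lies strictly between `q` and `r`, then
`f p` lies between `f q` and `f r`. -/
theorem stmt_7 (A B : Set ℝ) (R : Set (ℝ × ℝ)) (hR : IsCorrBetween A B R)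
    (c : ℝ) (hc0 : 0 ≤ c) (hc : relDis R = ENNReal.ofReal c)
    (t : ℝ) (ht : 2 * c < t)
    (hsep : ∀ a ∈ A, ∀ b ∈ A, a ≠ b → t ≤ |a - b|)
    (f : ℝ → ℝ) (hf : ∀ p ∈ A, (p, f p) ∈ R)
    (p q r : ℝ) (hp : p ∈ A) (hq : q ∈ A) (hr : r ∈ A)
    (hpq : p ≠ q) (hpr : p ≠ r) (hqr : q ≠ r)
    (h1 : min q r < p) (h2 : p < max q r) :
    min (f q) (f r) ≤ f p ∧ f p ≤ max (f q) (f r) :=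
  stmt_7_general A R c hc0 hc t ht hsep f hf p q r hp hq hr hpq hpr h1 h2
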